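/- For every s ∈ [0,1], the 1-form α_s = (1-s)(dx - y dθ) + s((1-y²) dx + xy dy - y dθ) is a contact form on the solid torus D² × S¹, where D² = {(x,y) : x² + y² ≤ 1}. -/

import Mathlib

/-!
Write `αₛ = a dx + b dy + c dθ` with `a = 1 - s y²`, `b = s x y`, `c = -y`. None of the
coefficients depends on `θ`, so the coefficient of `αₛ ∧ dαₛ` is `a ∂ᵧc + c (∂ₓb - ∂ᵧa)`,
which equals `-(1 + 2 s y²)` and is therefore negative for `s ≥ 0`.
-/

/-- Partial derivative `∂f/∂xᵢ` of a function on `ℝ³`. -/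
noncomputable def pd (f : (Fin 3 → ℝ) → ℝ) (i : Fin 3) (p : Fin 3 → ℝ) : ℝ :=
  fderiv ℝ f p (Pi.single i 1)

/-- Coefficient of `α ∧ dα` with respect to `dx ∧ dy ∧ dθ`, where
`α = a₀ dx + a₁ dy + a₂ dθ`. -/
noncomputable def contactCoeff (a : (Fin 3 → ℝ) → Fin 3 → ℝ) (p : Fin 3 → ℝ) : ℝ :=
  a p 0 * (pd (fun q => a q 2) 1 p - pd (fun q => a q 1) 2 p)
  - a p 1 * (pd (fun q => a q 2) 0 p - pd (fun q => a q 0) 2 p)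
  + a p 2 * (pd (fun q => a q 1) 0 p - pd (fun q => a q 0) 1 p)

theorem HasFDerivAt.pd_eq {f : (Fin 3 → ℝ) → ℝ} {f' : (Fin 3 → ℝ) →L[ℝ] ℝ} {p : Fin 3 → ℝ}
    (h : HasFDerivAt f f' p) (i : Fin 3) : pd f i p = f' (Pi.single i 1) := by
  rw [pd, h.fderiv]

def interpolatedForm (s : ℝ) (q : Fin 3 → ℝ) : Fin 3 → ℝ :=
  ![(1 - s) + s * (1 - (q 1)^2), s * q 0 * q 1, -q 1]

open ContinuousLinearMap in
theorem contactCoeff_interpolatedForm (s : ℝ) (p : Fin 3 → ℝ) :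
    contactCoeff (interpolatedForm s) p = -(1 + 2 * s * p 1 ^ 2) := by
  have hx : HasFDerivAt (fun q : Fin 3 → ℝ => q 0) (proj (R := ℝ) 0) p :=
    hasFDerivAt_apply (𝕜 := ℝ) 0 p
  have hy : HasFDerivAt (fun q : Fin 3 → ℝ => q 1) (proj (R := ℝ) 1) p :=
    hasFDerivAt_apply (𝕜 := ℝ) 1 p
  have ha : HasFDerivAt (fun q => interpolatedForm s q 0) _ p :=
    (((hy.pow 2).const_sub 1).const_mul s).const_add (1 - s)
  have hb : HasFDerivAt (fun q => interpolatedForm s q 1) _ p := (hx.const_mul s).mul hy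
  have hc : HasFDerivAt (fun q => interpolatedForm s q 2) _ p := hy.neg
  simp only [contactCoeff, ha.pd_eq, hb.pd_eq, hc.pd_eq]
  simp only [interpolatedForm, Fin.isValue, Matrix.cons_val_zero, Matrix.cons_val_one,
    Matrix.cons_val, neg_apply, proj_apply, add_apply, smul_apply, Pi.single_eq_same, ne_eq,
    Fin.reduceEq, not_false_eq_true, Pi.single_eq_of_ne, smul_eq_mul, nsmul_eq_mul,
    Nat.add_one_sub_one, pow_one, Nat.cast_ofNat]
  ring

/-- For every `s ∈ [0,1]`, the 1-form
`αₛ = (1-s)(dx - y dθ) + s((1-y²) dx + xy dy - y dθ)`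
is a contact form on the solid torus `D² × S¹` (coordinates `(x,y,θ)`, with
`x² + y² ≤ 1` and coefficients independent of — hence periodic in — `θ`). -/
theorem interpolated_forms_are_contact :
    ∀ s ∈ Set.Icc (0:ℝ) 1, ∀ p : Fin 3 → ℝ, (p 0)^2 + (p 1)^2 ≤ 1 →
      contactCoeff
        (fun q => ![(1 - s) + s * (1 - (q 1)^2), s * q 0 * q 1, -q 1]) p ≠ 0 := by
  intro s hs p _
  have hpos : 0 < 1 + 2 * s * p 1 ^ 2 := by
    have := mul_nonneg hs.1 (sq_nonneg (p 1))
    linarith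
  change contactCoeff (interpolatedForm s) p ≠ 0
  rw [contactCoeff_interpolatedForm]
  exact (neg_neg_of_pos hpos).ne
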